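/- arXiv:cs/0211019 — 5 statements merged into one kernel-verified Lean document; each statement's English description precedes it below -/
import Mathlib

section
/- Let (D, ⊑) be a finite partial order with a least element ⊥, and let F be a finite family of functions from D to D, each of which is inflationary (x ⊑ f(x) for all x) and monotonic (x ⊑ y implies f(x) ⊑ f(y)). Then F has a least common fixpoint: there exists d ∈ D such that f(d) = d for every f ∈ F, and d ⊑ e for every e ∈ D satisfying f(e) = e for all f ∈ F. -/
/-!
The elements lying below every common fixpoint form a set containing `⊥`, so by finiteness it has
a maximal element `d`. Each `f ∈ F` maps this set to itself (by monotonicity, since `f e = e` for the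
fixpoints `e` bounding it), and then `d ≤ f d` together with maximality forces `f d = d`.
-/

open Set Function

theorem Monotone.mapsTo_lowerBounds {α : Type*} [Preorder α] {f : α → α} {s : Set α}
    (hf : Monotone f) (hs : s ⊆ fixedPoints f) : MapsTo f (lowerBounds s) (lowerBounds s) :=
  fun _ hx _ he => (hs he).eq ▸ hf (hx he)

theorem Maximal.isFixedPt_of_mapsTo {α : Type*} [PartialOrder α] {f : α → α} {s : Set α}
    {x : α} (hx : Maximal (· ∈ s) x) (hf : MapsTo f s s) (hle : x ≤ f x) : IsFixedPt f x :=
  hx.eq_of_ge (hf hx.prop) hle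

/-- A finite partial order with a least element, together with a finite family
of inflationary and monotonic functions, has a least common fixpoint. -/
theorem least_common_fixpoint_exists {D : Type*} [PartialOrder D] [Fintype D] [OrderBot D]
    (F : Finset (D → D))
    (hinf : ∀ f ∈ F, ∀ x : D, x ≤ f x)
    (hmono : ∀ f ∈ F, ∀ x y : D, x ≤ y → f x ≤ f y) :
    ∃ d : D, (∀ f ∈ F, f d = d) ∧ ∀ e : D, (∀ f ∈ F, f e = e) → d ≤ e := by
  set S : Set D := {e | ∀ f ∈ F, f e = e}
  obtain ⟨d, hd⟩ := (toFinite (lowerBounds S)).exists_maximal ⟨⊥, fun _ _ => bot_le⟩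
  refine ⟨d, fun f hf => ?_, fun e he => hd.prop he⟩
  have hmaps : MapsTo f (lowerBounds S) (lowerBounds S) :=
    Monotone.mapsTo_lowerBounds (fun x y => hmono f hf x y) fun e he => he f hf
  exact hd.isFixedPt_of_mapsTo hmaps (hinf f hf d)
end

section
/- Let (D, ⊑) be a finite partial order with a least element ⊥, and let f₁, …, f_k be inflationary and monotonic functions from D to D. Let g := f_k ∘ ⋯ ∘ f₁ be their composition. Then there exists n such that gⁿ(⊥) is a fixpoint of g, and moreover gⁿ(⊥) is the least common fixpoint of {f₁, …, f_k}: each fᵢ fixes gⁿ(⊥), and gⁿ(⊥) ⊑ e for every e fixed by all the fᵢ. -/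
/-!
The composition `g` is again inflationary and monotone, so `gⁿ(⊥)` is an ascending chain which
stabilises in the finite order at a fixpoint `d` of `g`. Because every `fᵢ` is inflationary,
`g d = d` forces each `fᵢ` to fix `d`: the first `fᵢ` moving `d` would push it strictly up, and the
later ones can never bring it back down. Conversely a common fixpoint `e` of the `fᵢ` is fixed by
`g`, and monotonicity gives `gⁿ(⊥) ≤ gⁿ(e) = e`.
-/

namespace List

variable {α : Type*}

theorem le_foldl_apply [Preorder α] {L : List (α → α)} (hL : ∀ h ∈ L, ∀ x, x ≤ h x) (x : α) :
    x ≤ L.foldl (fun y h => h y) x := by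
  induction L generalizing x with
  | nil => exact le_rfl
  | cons h t ih =>
    exact (hL h mem_cons_self x).trans (ih (fun h' hh' => hL h' (mem_cons_of_mem h hh')) (h x))

theorem monotone_foldl_apply [Preorder α] {L : List (α → α)} (hL : ∀ h ∈ L, Monotone h) :
    Monotone fun x => L.foldl (fun y h => h y) x := by
  induction L with
  | nil => exact monotone_id
  | cons h t ih =>
    exact (ih fun h' hh' => hL h' (mem_cons_of_mem h hh')).comp (hL h mem_cons_self)

theorem foldl_apply_eq_self_iff [PartialOrder α] {L : List (α → α)}
    (hL : ∀ h ∈ L, ∀ x, x ≤ h x) {x : α} :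
    L.foldl (fun y h => h y) x = x ↔ ∀ h ∈ L, h x = x := by
  induction L with
  | nil => simp
  | cons h t ih =>
    have ht : ∀ h' ∈ t, ∀ x, x ≤ h' x := fun h' hh' => hL h' (mem_cons_of_mem h hh')
    rw [foldl_cons, forall_mem_cons]
    constructor
    · intro hfix
      have hhx : h x = x :=
        le_antisymm ((le_foldl_apply ht (h x)).trans_eq hfix) (hL h mem_cons_self x)
      rw [hhx] at hfix
      exact ⟨hhx, (ih ht).1 hfix⟩
    · rintro ⟨hhx, hfix⟩
      rw [hhx]
      exact (ih ht).2 hfix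

end List

namespace Function

variable {α : Type*}

theorem exists_iterate_bot_isFixedPt [PartialOrder α] [OrderBot α] [WellFoundedGT α]
    {g : α → α} (hg : id ≤ g) : ∃ n, IsFixedPt g (g^[n] ⊥) := by
  obtain ⟨n, hn⟩ := WellFoundedGT.monotone_chain_condition
    ⟨fun m => g^[m] ⊥, fun _ _ hmn => monotone_iterate_of_id_le hg hmn ⊥⟩
  refine ⟨n, ?_⟩
  rw [IsFixedPt, ← iterate_succ_apply' g n ⊥]
  exact (hn (n + 1) n.le_succ).symm

theorem iterate_bot_le_of_isFixedPt [Preorder α] [OrderBot α] {g : α → α} (hg : Monotone g)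
    {e : α} (he : IsFixedPt g e) (n : ℕ) : g^[n] ⊥ ≤ e :=
  (hg.iterate n bot_le).trans_eq (iterate_fixed he n)

end Function

open Function in
/-- Iterating the composition `g := f_k ∘ ⋯ ∘ f₁` of inflationary monotonic functions
on a finite partial order starting from `⊥` reaches, after some `n` steps, a fixpoint
of `g` which is the least common fixpoint of the `fᵢ`. -/
theorem iterate_composition_least_common_fixpoint
    {D : Type*} [PartialOrder D] [Fintype D] [OrderBot D]
    (k : ℕ) (f : Fin k → D → D)
    (hinf : ∀ i, ∀ x : D, x ≤ f i x)
    (hmono : ∀ i, ∀ x y : D, x ≤ y → f i x ≤ f i y)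
    (g : D → D)
    (hg : ∀ d : D, g d = (List.ofFn f).foldl (fun x h => h x) d) :
    ∃ n : ℕ, g (g^[n] ⊥) = g^[n] ⊥ ∧
      (∀ i, f i (g^[n] ⊥) = g^[n] ⊥) ∧
      ∀ e : D, (∀ i, f i e = e) → g^[n] ⊥ ≤ e := by
  have hinfL : ∀ h ∈ List.ofFn f, ∀ x, x ≤ h x := List.forall_mem_ofFn_iff.2 hinf
  have hmonoL : ∀ h ∈ List.ofFn f, Monotone h :=
    List.forall_mem_ofFn_iff.2 fun i x y => hmono i x y
  have hg_infl : id ≤ g := fun x => (List.le_foldl_apply hinfL x).trans_eq (hg x).symm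
  have hg_mono : Monotone g := funext hg ▸ List.monotone_foldl_apply hmonoL
  have hg_fix_iff : ∀ x, g x = x ↔ ∀ i, f i x = x := fun x => by
    rw [hg, List.foldl_apply_eq_self_iff hinfL, List.forall_mem_ofFn_iff]
  obtain ⟨n, hn⟩ := exists_iterate_bot_isFixedPt hg_infl
  exact ⟨n, hn, (hg_fix_iff _).1 hn,
    fun e he => iterate_bot_le_of_isFixedPt hg_mono ((hg_fix_iff e).2 he) n⟩
end

section
/- Let (D, ⊑) be a finite partial order with a least element ⊥, let f₁, …, f_k be inflationary and monotonic functions from D to D, and let σ : ℕ → {1, …, k} be a fair schedule, i.e., every index in {1, …, k} occurs infinitely often in σ. Define the sequence d₀ := ⊥ and d_{n+1} := f_{σ(n)}(d_n). Then there exists N such that d_n = d_N for all n ≥ N, and d_N is the least common fixpoint of {f₁, …, f_k}. -/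
/-!
The iterates increase because every `fᵢ` is inflationary, so in a finite order they stabilise.
Fairness applies every `fᵢ` to the limit, which is therefore a common fixpoint, and by monotonicity
every iterate stays below any common fixpoint.
-/

section FairIteration

variable {α ι : Type*} {f : ι → α → α} {σ : ℕ → ι} {d : ℕ → α}

theorem monotone_of_inflationary_steps [Preorder α] (hinf : ∀ i x, x ≤ f i x)
    (hds : ∀ n, d (n + 1) = f (σ n) (d n)) : Monotone d :=
  monotone_nat_of_le_succ fun n => hds n ▸ hinf _ _

theorem apply_eq_self_of_eventually_const (hds : ∀ n, d (n + 1) = f (σ n) (d n)) {N : ℕ}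
    (hstab : ∀ n ≥ N, d n = d N) {i : ι} (hσ : ∃ n ≥ N, σ n = i) : f i (d N) = d N := by
  obtain ⟨n, hn, rfl⟩ := hσ
  calc f (σ n) (d N) = f (σ n) (d n) := by rw [hstab n hn]
    _ = d (n + 1) := (hds n).symm
    _ = d N := hstab _ (by omega)

theorem le_common_fixpoint_of_monotone_steps [Preorder α] (hmono : ∀ i, Monotone (f i))
    (hds : ∀ n, d (n + 1) = f (σ n) (d n)) {e : α} (he : ∀ i, f i e = e) (h0 : d 0 ≤ e) :
    ∀ n, d n ≤ e
  | 0 => h0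
  | n + 1 => by
    rw [hds n, ← he (σ n)]
    exact hmono _ (le_common_fixpoint_of_monotone_steps hmono hds he h0 n)

end FairIteration

/-- A fair iteration of inflationary monotonic functions on a finite partial order
starting from `⊥` stabilizes, and its limit is the least common fixpoint. -/
theorem fair_iteration_least_common_fixpoint
    {D : Type*} [PartialOrder D] [Fintype D] [OrderBot D]
    (k : ℕ) (f : Fin k → D → D)
    (hinf : ∀ i, ∀ x : D, x ≤ f i x)
    (hmono : ∀ i, ∀ x y : D, x ≤ y → f i x ≤ f i y)
    (σ : ℕ → Fin k)
    (hfair : ∀ i : Fin k, ∀ N : ℕ, ∃ n ≥ N, σ n = i)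
    (d : ℕ → D) (hd0 : d 0 = ⊥) (hds : ∀ n : ℕ, d (n + 1) = f (σ n) (d n)) :
    ∃ N : ℕ, (∀ n ≥ N, d n = d N) ∧
      (∀ i, f i (d N) = d N) ∧
      ∀ e : D, (∀ i, f i e = e) → d N ≤ e := by
  obtain ⟨N, hN⟩ :=
    WellFoundedGT.monotone_chain_condition ⟨d, monotone_of_inflationary_steps hinf hds⟩
  have hstab : ∀ n ≥ N, d n = d N := fun n hn => (hN n hn).symm
  refine ⟨N, hstab, fun i => apply_eq_self_of_eventually_const hds hstab (hfair i N), ?_⟩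
  intro e he
  exact le_common_fixpoint_of_monotone_steps (fun i _ _ h => hmono i _ _ h) hds he
    (hd0 ▸ bot_le) N
end

section
/- Let (D, ⊑) be a partial order with least element ⊥, let F be a family of monotonic functions from D to D, and let F' ⊆ F. Suppose d ∈ D is reachable from ⊥ by applications of functions from F (i.e., there is a finite sequence ⊥ = d₀, d₁, …, d_m = d with each d_{i+1} = f(d_i) for some f ∈ F), that f(d) = d for every f ∈ F', and that every f ∈ F \ F' is stable above d (i.e., d ⊑ e implies f(e) = e). Then d is the least common fixpoint of F: every f ∈ F satisfies f(d) = d, and d ⊑ e for every e with f(e) = e for all f ∈ F. -/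
/-- If `d` is reachable from `⊥` via monotonic functions from `F`, is a fixpoint of
every function in `F'`, and every function in `F \ F'` is stable above `d`, then `d`
is the least common fixpoint of `F`. -/
theorem reachable_partial_fixpoint_is_least {D : Type*} [PartialOrder D] [OrderBot D]
    (F F' : Set (D → D)) (hsub : F' ⊆ F)
    (hmono : ∀ f ∈ F, ∀ x y : D, x ≤ y → f x ≤ f y)
    (d : D)
    (hreach : ∃ (m : ℕ) (seq : ℕ → D), seq 0 = ⊥ ∧ seq m = d ∧
      ∀ i < m, ∃ f ∈ F, seq (i + 1) = f (seq i))
    (hfix : ∀ f ∈ F', f d = d)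
    (hstab : ∀ f ∈ F \ F', ∀ e : D, d ≤ e → f e = e) :
    (∀ f ∈ F, f d = d) ∧ ∀ e : D, (∀ f ∈ F, f e = e) → d ≤ e := by
  constructor
  · intro f hf
    by_cases h : f ∈ F'
    · exact hfix f h
    · exact hstab f ⟨hf, h⟩ d le_rfl
  · rintro e he
    obtain ⟨m, seq, h0, hm, hstep⟩ := hreach
    have key : ∀ i ≤ m, seq i ≤ e := by
      intro i hi
      induction i with
      | zero => simp [h0]
      | succ n ih =>
        obtain ⟨f, hf, heq⟩ := hstep n (Nat.lt_of_succ_le hi)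
        rw [heq, ← he f hf]
        exact hmono f hf _ _ (ih (Nat.le_of_succ_le hi))
    rw [← hm]; exact key m le_rfl
end

section
/- Let (D, ⊑) be a finite partial order and F a finite family of inflationary and monotonic functions from D to D. Let d₀ be a least common fixpoint of F, and let F_fin ⊆ F be such that every f ∈ F \ F_fin is stable above d₀ (i.e., d₀ ⊑ e implies f(e) = e). Then for every e with d₀ ⊑ e: (i) an element e₁ with e ⊑ e₁ is a common fixpoint of F_fin if and only if it is a common fixpoint of F; and (ii) the least common fixpoint of F above e exists and coincides with the least common fixpoint of F_fin above e. -/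
/-- After computing the least common fixpoint `d₀` of `F` and discarding the
functions outside `Ffin` (which are stable above `d₀`), for any `e` above `d₀`:
(i) an element above `e` is a common fixpoint of `Ffin` iff it is a common
fixpoint of `F`; (ii) the least common fixpoint of `F` above `e` exists and
coincides with the least common fixpoint of `Ffin` above `e`. -/
theorem recompute_least_fixpoint {D : Type*} [PartialOrder D] [Fintype D]
    (F Ffin : Finset (D → D)) (hsub : Ffin ⊆ F)
    (hinf : ∀ f ∈ F, ∀ x : D, x ≤ f x)
    (hmono : ∀ f ∈ F, ∀ x y : D, x ≤ y → f x ≤ f y)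
    (d0 : D)
    (hd0fix : ∀ f ∈ F, f d0 = d0)
    (hd0least : ∀ e : D, (∀ f ∈ F, f e = e) → d0 ≤ e)
    (hstab : ∀ f ∈ F, f ∉ Ffin → ∀ e : D, d0 ≤ e → f e = e) :
    ∀ e : D, d0 ≤ e →
      ((∀ e1 : D, e ≤ e1 → ((∀ f ∈ Ffin, f e1 = e1) ↔ (∀ f ∈ F, f e1 = e1))) ∧
       ∃ e0 : D,
         (e ≤ e0 ∧ (∀ f ∈ F, f e0 = e0) ∧
           ∀ e1 : D, e ≤ e1 → (∀ f ∈ F, f e1 = e1) → e0 ≤ e1) ∧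
         (e ≤ e0 ∧ (∀ f ∈ Ffin, f e0 = e0) ∧
           ∀ e1 : D, e ≤ e1 → (∀ f ∈ Ffin, f e1 = e1) → e0 ≤ e1)) := by
  intro e hde
  -- Part (i)
  have part1 : ∀ e1 : D, e ≤ e1 → ((∀ f ∈ Ffin, f e1 = e1) ↔ (∀ f ∈ F, f e1 = e1)) := by
    intro e1 he1
    constructor
    · intro h f hf
      by_cases hmem : f ∈ Ffin
      · exact h f hmem
      · exact hstab f hf hmem e1 (le_trans hde he1)
    · intro h f hf
      exact h f (hsub hf)
  refine ⟨part1, ?_⟩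
  -- existence of least fixpoint above any x with the invariant
  have wf : WellFounded (fun a b : D => b < a) :=
    (Finite.to_wellFoundedGT (α := D)).wf
  have key : ∀ x : D, e ≤ x →
      (∀ e1 : D, e ≤ e1 → (∀ f ∈ F, f e1 = e1) → x ≤ e1) →
      ∃ e0 : D, x ≤ e0 ∧ (∀ f ∈ F, f e0 = e0) ∧
        ∀ e1 : D, e ≤ e1 → (∀ f ∈ F, f e1 = e1) → e0 ≤ e1 := by
    intro x
    induction x using wf.induction with
    | _ x ih =>
      intro hex hlow
      by_cases hfix : ∀ f ∈ F, f x = x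
      · exact ⟨x, le_refl x, hfix, hlow⟩
      · push_neg at hfix
        obtain ⟨f, hf, hne⟩ := hfix
        have hlt : x < f x := lt_of_le_of_ne (hinf f hf x) (fun h => hne h.symm)
        obtain ⟨e0, h1, h2, h3⟩ := ih (f x) hlt (le_trans hex hlt.le)
          (fun e1 he1 hfe1 => (hfe1 f hf) ▸ hmono f hf x e1 (hlow e1 he1 hfe1))
        exact ⟨e0, le_trans hlt.le h1, h2, h3⟩
  obtain ⟨e0, h1, h2, h3⟩ := key e (le_refl e) (fun e1 he1 _ => he1)
  exact ⟨e0, ⟨h1, h2, h3⟩, h1, fun f hf => h2 f (hsub hf),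
    fun e1 he1 hfe1 => h3 e1 he1 ((part1 e1 he1).mp hfe1)⟩
end
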